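/- arXiv:math/0501434 — 3 statements merged into one kernel-verified Lean document; each statement's English description precedes it below -/
import Mathlib

section
/- Define f_r(x) for x > 0 and integer r ≥ 0 by f_0(x) = e^{-x} and f_r(x) = ∫_x^∞ f_{r-1}(t)/t dt for r ≥ 1. Then f_r(x) = (1/r!) ∫_x^∞ (log(t/x))^r e^{-t} dt for all x > 0 and r ≥ 1. -/
/-!
Induction on `r`. Exchanging the order of integration over the triangle `x < t < s` (legitimate
since the integrand is nonnegative) turns `∫_x^∞ (∫_t^∞ log (s/t)^r e^{-s} ds) dt/t` into
`∫_x^∞ e^{-s} (∫_x^s log (s/t)^r dt/t) ds`, and the inner integral is `log (s/x)^(r+1) / (r+1)`.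
-/

open MeasureTheory Real Set Function

theorem integral_Ioi_integral_Ioi_swap {K : ℝ → ℝ → ℝ} {x : ℝ} (hK : Measurable (uncurry K))
    (hK_nonneg : ∀ t s, x < t → t < s → 0 ≤ K t s)
    (h_inner : ∀ s, x < s → IntegrableOn (fun t => K t s) (Ioo x s))
    (h_outer : IntegrableOn (fun s => ∫ t in Ioo x s, K t s) (Ioi x)) :
    ∫ t in Ioi x, ∫ s in Ioi t, K t s = ∫ s in Ioi x, ∫ t in Ioo x s, K t s := by
  set F : ℝ → ℝ → ℝ := fun t => (Ioi t).indicator (K t)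
  have hF : Measurable (uncurry F) :=
    Measurable.ite (measurableSet_lt measurable_fst measurable_snd) hK measurable_const
  have hF_slice (s : ℝ) : EqOn (F · s) ((Iio s).indicator (K · s)) (Ioi x) := fun t _ => by
    simp only [F, indicator, mem_Ioi, mem_Iio]
  have hF_slice_int (s : ℝ) : Integrable (F · s) (volume.restrict (Ioi x)) := by
    refine (integrableOn_congr_fun (hF_slice s) measurableSet_Ioi).2 ?_
    rw [IntegrableOn, integrable_indicator_iff measurableSet_Iio, IntegrableOn,
      Measure.restrict_restrict measurableSet_Iio, Iio_inter_Ioi]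
    rcases lt_or_ge x s with hxs | hsx
    · exact h_inner s hxs
    · simp [Ioo_eq_empty_of_le hsx]
  have hF_slice_integral (s : ℝ) : ∫ t in Ioi x, F t s = ∫ t in Ioo x s, K t s := by
    rw [setIntegral_congr_fun measurableSet_Ioi (hF_slice s),
      integral_indicator measurableSet_Iio, Measure.restrict_restrict measurableSet_Iio,
      Iio_inter_Ioi]
  have h_outer_zero (s : ℝ) (hs : s ∉ Ioi x) : ∫ t in Ioo x s, K t s = 0 := by
    rw [Ioo_eq_empty (by simpa using hs), Measure.restrict_empty, integral_zero_measure]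
  have hF_int : Integrable (uncurry F) ((volume.restrict (Ioi x)).prod volume) := by
    rw [integrable_prod_iff' hF.aestronglyMeasurable]
    refine ⟨Filter.Eventually.of_forall hF_slice_int, ?_⟩
    have h_norm (s : ℝ) : ∫ t in Ioi x, ‖F t s‖ = ∫ t in Ioo x s, K t s := by
      rw [← hF_slice_integral]
      refine setIntegral_congr_fun measurableSet_Ioi fun t ht => Real.norm_of_nonneg ?_
      simp only [F, indicator]
      split_ifs with hts
      exacts [hK_nonneg t s ht hts, le_rfl]
    simp only [uncurry_apply_pair, h_norm]
    exact h_outer.integrable_of_forall_notMem_eq_zero h_outer_zero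
  calc ∫ t in Ioi x, ∫ s in Ioi t, K t s = ∫ t in Ioi x, ∫ s, F t s := by
        simp only [F, integral_indicator measurableSet_Ioi]
    _ = ∫ s, ∫ t in Ioi x, F t s := integral_integral_swap hF_int
    _ = ∫ s, ∫ t in Ioo x s, K t s := by simp only [hF_slice_integral]
    _ = ∫ s in Ioi x, ∫ t in Ioo x s, K t s :=
        (setIntegral_eq_integral_of_forall_compl_eq_zero h_outer_zero).symm

theorem integrableOn_log_div_pow_mul_exp_neg (r : ℕ) {x : ℝ} (hx : 0 < x) :
    IntegrableOn (fun s => log (s / x) ^ r * exp (-s)) (Ioi x) := by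
  have h_gamma : IntegrableOn (fun s : ℝ => s ^ r * exp (-s)) (Ioi x) := by
    refine ((GammaIntegral_convergent (s := r + 1) (by positivity)).mono_set
      (Ioi_subset_Ioi hx.le)).congr_fun (fun s _ => ?_) measurableSet_Ioi
    simp [rpow_natCast, mul_comm]
  refine (h_gamma.const_mul (x⁻¹ ^ r)).mono' (by fun_prop) ?_
  filter_upwards [ae_restrict_mem measurableSet_Ioi] with s hs
  have h_log : 0 ≤ log (s / x) := log_nonneg ((one_le_div hx).2 (le_of_lt hs))
  have hs0 : 0 < s := hx.trans hs
  rw [norm_of_nonneg (by positivity), ← mul_assoc, ← mul_pow, inv_mul_eq_div]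
  gcongr
  exact log_le_self (by positivity)

theorem continuousOn_log_div_pow_div (r : ℕ) {s : ℝ} (hs : s ≠ 0) :
    ContinuousOn (fun t => log (s / t) ^ r / t) {0}ᶜ := by
  fun_prop (disch := simp_all)

theorem integral_Ioo_log_div_pow_div (r : ℕ) {x s : ℝ} (hx : 0 < x) (hxs : x < s) :
    ∫ t in Ioo x s, log (s / t) ^ r / t = log (s / x) ^ (r + 1) / (r + 1) := by
  have hs : 0 < s := hx.trans hxs
  have h_pos : uIcc x s ⊆ Ioi 0 := fun t ht => hx.trans_le (uIcc_of_le hxs.le ▸ ht).1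
  have h_deriv : ∀ t ∈ uIcc x s,
      HasDerivAt (fun u => -(log s - log u) ^ (r + 1) / (r + 1)) (log (s / t) ^ r / t) t := by
    intro t ht
    have ht0 : 0 < t := h_pos ht
    refine ((((hasDerivAt_log ht0.ne').const_sub (log s)).pow (r + 1)).neg.div_const
      ((r : ℝ) + 1)).congr_deriv ?_
    rw [log_div hs.ne' ht0.ne']
    field_simp
    push_cast
    field_simp
  have h_cont : ContinuousOn (fun t => log (s / t) ^ r / t) (uIcc x s) :=
    (continuousOn_log_div_pow_div r hs.ne').mono fun t ht => ne_of_gt (h_pos ht)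
  rw [← integral_Ioc_eq_integral_Ioo, ← intervalIntegral.integral_of_le hxs.le,
    intervalIntegral.integral_eq_sub_of_hasDerivAt h_deriv h_cont.intervalIntegrable,
    log_div hs.ne' hx.ne']
  simp [neg_div]

noncomputable def logExpIntegral (r : ℕ) (x : ℝ) : ℝ :=
  ∫ t in Ioi x, log (t / x) ^ r * exp (-t)

theorem integral_Ioi_logExpIntegral_div (r : ℕ) {x : ℝ} (hx : 0 < x) :
    ∫ t in Ioi x, logExpIntegral r t / t = logExpIntegral (r + 1) x / (r + 1) := by
  set K : ℝ → ℝ → ℝ := fun t s => log (s / t) ^ r / t * exp (-s)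
  have h_inner (s : ℝ) (hxs : x < s) :
      ∫ t in Ioo x s, K t s = log (s / x) ^ (r + 1) * exp (-s) / (r + 1) := by
    rw [integral_mul_const, integral_Ioo_log_div_pow_div r hx hxs]
    ring
  have h_swap : ∫ t in Ioi x, ∫ s in Ioi t, K t s = ∫ s in Ioi x, ∫ t in Ioo x s, K t s := by
    refine integral_Ioi_integral_Ioi_swap (by fun_prop) (fun t s hxt hts => ?_)
      (fun s hxs => ?_) ?_
    · have : 0 ≤ log (s / t) := log_nonneg ((one_le_div (hx.trans hxt)).2 hts.le)
      have : 0 < t := hx.trans hxt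
      positivity
    · refine (((continuousOn_log_div_pow_div r (hx.trans hxs).ne').mono ?_).integrableOn_Icc
        |>.mono_set Ioo_subset_Icc_self).mul_const _
      exact fun t ht => ne_of_gt (hx.trans_le ht.1)
    · exact IntegrableOn.congr_fun ((integrableOn_log_div_pow_mul_exp_neg (r + 1) hx).div_const _)
        (fun s hs => (h_inner s hs).symm) measurableSet_Ioi
  calc ∫ t in Ioi x, logExpIntegral r t / t = ∫ t in Ioi x, ∫ s in Ioi t, K t s := by
        refine setIntegral_congr_fun measurableSet_Ioi fun t _ => ?_
        simp only [logExpIntegral, K, ← integral_div, div_mul_eq_mul_div]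
    _ = ∫ s in Ioi x, log (s / x) ^ (r + 1) * exp (-s) / (r + 1) := by
        rw [h_swap]
        exact setIntegral_congr_fun measurableSet_Ioi h_inner
    _ = logExpIntegral (r + 1) x / (r + 1) := integral_div _ _

theorem f_r_integral_formula
    (f : ℕ → ℝ → ℝ)
    (h0 : ∀ x : ℝ, 0 < x → f 0 x = Real.exp (-x))
    (hrec : ∀ r : ℕ, ∀ x : ℝ, 0 < x →
      f (r + 1) x = ∫ t in Set.Ioi x, f r t / t) :
    ∀ r : ℕ, 1 ≤ r → ∀ x : ℝ, 0 < x →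
      f r x = (1 / (r.factorial : ℝ)) *
        ∫ t in Set.Ioi x, (Real.log (t / x)) ^ r * Real.exp (-t) := by
  suffices h : ∀ r x, 0 < x → f r x = logExpIntegral r x / r.factorial by
    intro r _ x hx
    rw [h r x hx, logExpIntegral, one_div_mul_eq_div]
  intro r
  induction r with
  | zero =>
    intro x hx
    simp only [h0 x hx, logExpIntegral, pow_zero, one_mul, integral_exp_neg_Ioi,
      Nat.factorial_zero, Nat.cast_one, div_one]
  | succ r ih =>
    intro x hx
    rw [hrec r x hx, setIntegral_congr_fun measurableSet_Ioi fun t ht => by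
      rw [ih t (hx.trans ht), div_right_comm], integral_div,
      integral_Ioi_logExpIntegral_div r hx, Nat.factorial_succ]
    push_cast
    field_simp
end

section
/- Suppose f is holomorphic on the closed disc |z| ≤ R (R > 0) with f(0) ≠ 0, and f has a zero of multiplicity r at a point ρ₀ with 0 < |ρ₀| < R. Then r · log(R/|ρ₀|) + log|f(0)| ≤ max_{|z| = R} log|f(z)|. -/
/-!
By Jensen's inequality, if `‖f‖ ≤ M` on the circle `|z| = R`, then the zeros of `f` in the closed
disc of radius `|ρ₀|`, counted with multiplicity, number at most
`log (M / |f 0|) / log (R / |ρ₀|)`; a zero of order at least `r` at `ρ₀` is among them. Taking for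
`M` the maximum of `‖f‖` on the circle, attained at some `z`, gives the bound.
-/

open Complex Metric MeromorphicOn

-- `untop₀` sends an infinite order to `0`, so finiteness of the order is needed.
theorem AnalyticOnNhd.natCast_le_divisor {𝕜 E : Type*} [NontriviallyNormedField 𝕜]
    [NormedAddCommGroup E] [NormedSpace 𝕜 E] {f : 𝕜 → E} {U : Set 𝕜} {z : 𝕜} {r : ℕ}
    (hf : AnalyticOnNhd 𝕜 f U) (hz : z ∈ U) (hfin : analyticOrderAt f z ≠ ⊤)
    (hr : r ≤ analyticOrderAt f z) : (r : ℤ) ≤ divisor f U z := by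
  lift analyticOrderAt f z to ℕ using hfin with n hn
  rw [hf.divisor_apply hz, ← hn]
  simpa using hr

theorem AnalyticOnNhd.natCast_mul_log_le_log_div {f : ℂ → ℂ} {c ρ : ℂ} {R M : ℝ} {r : ℕ}
    (hf : AnalyticOnNhd ℂ f (closedBall c R)) (hfc : f c ≠ 0)
    (hρ : 0 < ‖ρ - c‖) (hρR : ‖ρ - c‖ < R) (hr : r ≤ analyticOrderAt f ρ)
    (hM : 1 ≤ M) (hbound : ∀ z ∈ sphere c R, ‖f z‖ ≤ M) :
    r * Real.log (R / ‖ρ - c‖) ≤ Real.log (M / ‖f c‖) := by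
  have hR : |R| = R := abs_of_pos (hρ.trans hρR)
  have hρ_mem : ρ ∈ closedBall c ‖ρ - c‖ := by simp [dist_eq_norm]
  have hsub : closedBall c ‖ρ - c‖ ⊆ closedBall c R := closedBall_subset_closedBall hρR.le
  have hfin : analyticOrderAt f ρ ≠ ⊤ :=
    hf.analyticOrderAt_ne_top_of_isPreconnected (convex_closedBall c R).isPreconnected
      (mem_closedBall_self (hρ.trans hρR).le) (hsub hρ_mem)
      (by simp [analyticOrderAt_eq_zero.2 (Or.inr hfc)])
  have hle_sum : (r : ℤ) ≤ ∑ᶠ u, divisor f (closedBall c ‖ρ - c‖) u :=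
    ((hf.mono hsub).natCast_le_divisor hρ_mem hfin hr).trans <|
      single_le_finsum ρ ((divisor _ _).finiteSupport (isCompact_closedBall _ _))
        (hf.mono hsub).divisor_nonneg
  have jensen := AnalyticOnNhd.sum_divisor_le (r := ‖ρ - c‖) (R := R) (by rwa [abs_norm])
    (by rwa [abs_norm, hR]) hM (by rwa [hR]) hfc (by rwa [hR])
  have hlog : 0 < Real.log (R / ‖ρ - c‖) := Real.log_pos ((one_lt_div hρ).2 hρR)
  rw [abs_norm, le_div_iff₀ hlog] at jensen
  exact (mul_le_mul_of_nonneg_right (mod_cast hle_sum) hlog.le).trans jensen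

-- Normalizing by `M⁻¹` reduces to the case `M = 1`; the condition `1 ≤ M` above is needed because
-- `Real.log 0 = 0` at zeros of `f` on the circle.
theorem AnalyticOnNhd.natCast_mul_log_add_log_norm_le {f : ℂ → ℂ} {c ρ : ℂ} {R M : ℝ} {r : ℕ}
    (hf : AnalyticOnNhd ℂ f (closedBall c R)) (hfc : f c ≠ 0)
    (hρ : 0 < ‖ρ - c‖) (hρR : ‖ρ - c‖ < R) (hr : r ≤ analyticOrderAt f ρ)
    (hM : 0 < M) (hbound : ∀ z ∈ sphere c R, ‖f z‖ ≤ M) :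
    r * Real.log (R / ‖ρ - c‖) + Real.log ‖f c‖ ≤ Real.log M := by
  have hMc : (M : ℂ)⁻¹ ≠ 0 := by simpa using hM.ne'
  have hg : AnalyticOnNhd ℂ (fun z ↦ (M : ℂ)⁻¹ * f z) (closedBall c R) :=
    fun z hz ↦ analyticAt_const.mul (hf z hz)
  have horder : analyticOrderAt (fun z ↦ (M : ℂ)⁻¹ * f z) ρ = analyticOrderAt f ρ := by
    change analyticOrderAt ((fun _ ↦ (M : ℂ)⁻¹) * f) ρ = _
    rw [analyticOrderAt_mul analyticAt_const (hf ρ (by simpa [dist_eq_norm] using hρR.le)),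
      (analyticOrderAt_eq_zero (f := fun _ ↦ (M : ℂ)⁻¹)).2 (Or.inr hMc), zero_add]
  have key := hg.natCast_mul_log_le_log_div (mul_ne_zero hMc hfc) hρ hρR (horder ▸ hr) le_rfl
    fun z hz ↦ by
      rw [norm_mul, norm_inv, Complex.norm_real, Real.norm_of_nonneg hM.le, inv_mul_le_one₀ hM]
      exact hbound z hz
  rw [norm_mul, norm_inv, Complex.norm_real, Real.norm_of_nonneg hM.le, one_div, mul_inv, inv_inv,
    Real.log_mul hM.ne' (inv_ne_zero (norm_ne_zero_iff.2 hfc)), Real.log_inv] at key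
  linarith

theorem jensen_multiplicity_bound_general
    (f : ℂ → ℂ) (R : ℝ) (hR : 0 < R) (U : Set ℂ) (hU : IsOpen U)
    (hUball : Metric.closedBall (0 : ℂ) R ⊆ U)
    (hf : DifferentiableOn ℂ f U)
    (hf0 : f 0 ≠ 0)
    (ρ₀ : ℂ) (hρ₀pos : 0 < ‖ρ₀‖) (hρ₀R : ‖ρ₀‖ < R)
    (r : ℕ) (g : ℂ → ℂ) (hg : AnalyticAt ℂ g ρ₀)
    (hfg : ∀ᶠ z in nhds ρ₀, f z = (z - ρ₀) ^ r * g z) :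
    ∃ z : ℂ, ‖z‖ = R ∧
      (r : ℝ) * Real.log (R / ‖ρ₀‖) + Real.log (‖f 0‖) ≤
        Real.log (‖f z‖) := by
  have hf_an : AnalyticOnNhd ℂ f (closedBall 0 R) := (hf.analyticOnNhd hU).mono hUball
  have hr : r ≤ analyticOrderAt f ρ₀ :=
    (natCast_le_analyticOrderAt (hf_an ρ₀ (by simpa using hρ₀R.le))).2 ⟨g, hg, by simpa using hfg⟩
  obtain ⟨z₀, hz₀, hmax⟩ := exists_mem_frontier_isMaxOn_norm isBounded_ball (nonempty_ball.2 hR)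
    (hf.diffContOnCl_ball hUball)
  rw [frontier_ball 0 hR.ne', mem_sphere_zero_iff_norm] at hz₀
  rw [closure_ball 0 hR.ne'] at hmax
  have hf0_le : ‖f 0‖ ≤ ‖f z₀‖ := hmax (mem_closedBall_self hR.le)
  refine ⟨z₀, hz₀, ?_⟩
  simpa using hf_an.natCast_mul_log_add_log_norm_le hf0 (by rwa [sub_zero]) (by rwa [sub_zero]) hr
    ((norm_pos_iff.2 hf0).trans_le hf0_le) fun z hz ↦ hmax (sphere_subset_closedBall hz)

theorem jensen_multiplicity_bound
    (f : ℂ → ℂ) (R : ℝ) (hR : 0 < R) (U : Set ℂ) (hU : IsOpen U)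
    (hUball : Metric.closedBall (0 : ℂ) R ⊆ U)
    (hf : DifferentiableOn ℂ f U)
    (hf0 : f 0 ≠ 0)
    (ρ₀ : ℂ) (hρ₀pos : 0 < ‖ρ₀‖) (hρ₀R : ‖ρ₀‖ < R)
    (r : ℕ) (g : ℂ → ℂ) (hg : AnalyticAt ℂ g ρ₀) (hg0 : g ρ₀ ≠ 0)
    (hfg : ∀ᶠ z in nhds ρ₀, f z = (z - ρ₀) ^ r * g z) :
    ∃ z : ℂ, ‖z‖ = R ∧
      (r : ℝ) * Real.log (R / ‖ρ₀‖) + Real.log (‖f 0‖) ≤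
        Real.log (‖f z‖) :=
  jensen_multiplicity_bound_general f R hR U hU hUball hf hf0 ρ₀ hρ₀pos hρ₀R r g hg hfg
end

section
/- Let ρ = β + iγ be a zero of the Riemann zeta function with 1/2 < β < 1 and γ sufficiently large. Suppose |ζ(1 + iγ)| ≥ c₀ (log γ)^{-2/3} (log log γ)^{-1/3} for some c₀ > 0, and let M₁ = max over σ ≥ 1/2, |t| ≤ 1/2 of log|ζ(σ + iγ + it)|. If m denotes the multiplicity of ρ as a zero of ζ, then m · log(1/(2 - 2β)) ≤ M₁ + (2/3) log log γ + (1/3) log log log γ - log c₀. -/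
/-!
On the disc `|z - (1 + iγ)| ≤ 1/2` (where `ζ` is holomorphic and, by the definition of `M₁`,
bounded by `exp M₁` on the boundary), divide `ζ` by the `m`-th power of the Blaschke factor
vanishing at `ρ`. It has modulus `1` on the boundary circle and `2 (1 - β)` at the centre, so the
maximum modulus principle gives `|ζ(1 + iγ)| ≤ exp M₁ · (2 - 2β) ^ m`. Taking logarithms and
inserting the lower bound on `|ζ(1 + iγ)|` gives the claim.
-/

open Complex ComplexConjugate Metric Filter Topology

/-- `f z / (z - a) ^ m`, continued by `g a` at `a`: when `f = (· - a) ^ m * g` near `a`, this is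
`f` with its zero of order `m` at `a` divided out. -/
noncomputable def divSubPow (f g : ℂ → ℂ) (a : ℂ) (m : ℕ) : ℂ → ℂ :=
  Function.update (fun z => f z / (z - a) ^ m) a (g a)

section divSubPow

variable {f g : ℂ → ℂ} {a : ℂ} {m : ℕ}

theorem divSubPow_mul_pow (hfg : ∀ᶠ z in 𝓝 a, f z = (z - a) ^ m * g z) (z : ℂ) :
    divSubPow f g a m z * (z - a) ^ m = f z := by
  rcases eq_or_ne z a with rfl | hza
  · rw [divSubPow, Function.update_self, mul_comm, hfg.self_of_nhds]
  · rw [divSubPow, Function.update_of_ne hza,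
      div_mul_cancel₀ _ (pow_ne_zero m (sub_ne_zero.mpr hza))]

theorem divSubPow_eventuallyEq (hfg : ∀ᶠ z in 𝓝 a, f z = (z - a) ^ m * g z) :
    divSubPow f g a m =ᶠ[𝓝 a] g := by
  filter_upwards [hfg] with z hz
  rcases eq_or_ne z a with rfl | hza
  · exact Function.update_self ..
  · rw [divSubPow, Function.update_of_ne hza, hz,
      mul_div_cancel_left₀ _ (pow_ne_zero m (sub_ne_zero.mpr hza))]

theorem differentiableAt_divSubPow {z : ℂ} (hf : z ≠ a → DifferentiableAt ℂ f z)
    (hg : DifferentiableAt ℂ g a) (hfg : ∀ᶠ z in 𝓝 a, f z = (z - a) ^ m * g z) :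
    DifferentiableAt ℂ (divSubPow f g a m) z := by
  rcases eq_or_ne z a with rfl | hza
  · exact hg.congr_of_eventuallyEq (divSubPow_eventuallyEq hfg)
  · refine ((hf hza).div ((differentiableAt_id.sub_const a).pow m)
      (pow_ne_zero m (sub_ne_zero.mpr hza))).congr_of_eventuallyEq ?_
    filter_upwards [eventually_ne_nhds hza] with w hw
    exact Function.update_of_ne hw ..

end divSubPow

theorem norm_sq_sub_conj_mul_of_mem_sphere {c a z : ℂ} {r : ℝ} (hz : z ∈ sphere c r) :
    ‖(r : ℂ) ^ 2 - conj (a - c) * (z - c)‖ = r * ‖z - a‖ := by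
  have hzc : ‖z - c‖ = r := mem_sphere_iff_norm.mp hz
  have hr : (r : ℂ) ^ 2 = (z - c) * conj (z - c) := by rw [mul_conj', hzc]
  rw [hr, show (z - c) * conj (z - c) - conj (a - c) * (z - c) = (z - c) * conj (z - a) by
    simp only [map_sub]; ring, norm_mul, norm_conj, hzc]

theorem norm_le_mul_div_pow_of_eventuallyEq_pow_mul {f g : ℂ → ℂ} {a c : ℂ} {r M : ℝ} {m : ℕ}
    (hr : 0 < r) (hf : ∀ z ∈ closedBall c r, z ≠ a → DifferentiableAt ℂ f z)
    (hg : DifferentiableAt ℂ g a) (hfg : ∀ᶠ z in 𝓝 a, f z = (z - a) ^ m * g z)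
    (hM : ∀ z ∈ sphere c r, ‖f z‖ ≤ M) :
    ‖f c‖ ≤ M * (‖c - a‖ / r) ^ m := by
  -- `F = r ^ m * f / B ^ m` for the Blaschke factor
  -- `B z = r (z - a) / (r ^ 2 - conj (a - c) (z - c))`, which has modulus `1` on `sphere c r`.
  set F : ℂ → ℂ := fun z =>
    divSubPow f g a m z * ((r : ℂ) ^ 2 - conj (a - c) * (z - c)) ^ m
  have hF : DiffContOnCl ℂ F (ball c r) := by
    refine DifferentiableOn.diffContOnCl fun z hz => DifferentiableAt.differentiableWithinAt ?_
    rw [closure_ball c hr.ne'] at hz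
    exact (differentiableAt_divSubPow (hf z hz) hg hfg).mul (by fun_prop)
  have hF_sphere : ∀ z ∈ frontier (ball c r), ‖F z‖ ≤ M * r ^ m := by
    intro z hz
    rw [frontier_ball c hr.ne'] at hz
    calc ‖F z‖ = ‖divSubPow f g a m z * (z - a) ^ m‖ * r ^ m := by
          simp only [F, norm_mul, norm_pow, norm_sq_sub_conj_mul_of_mem_sphere hz]; ring
      _ ≤ M * r ^ m := by
          rw [divSubPow_mul_pow hfg]; gcongr; exact hM z hz
  have hF_center : ‖F c‖ ≤ M * r ^ m :=
    norm_le_of_forall_mem_frontier_norm_le isBounded_ball hF hF_sphere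
      (subset_closure (mem_ball_self hr))
  have hFc : ‖F c‖ * ‖c - a‖ ^ m = ‖f c‖ * r ^ (2 * m) := by
    rw [← divSubPow_mul_pow hfg c]
    simp only [F, sub_self, mul_zero, sub_zero, norm_mul, norm_pow, norm_real,
      Real.norm_of_nonneg hr.le]
    ring
  have hrm : 0 < r ^ m := pow_pos hr m
  rw [div_pow, ← mul_div_assoc, le_div_iff₀ hrm]
  refine le_of_mul_le_mul_right ?_ hrm
  calc ‖f c‖ * r ^ m * r ^ m = ‖F c‖ * ‖c - a‖ ^ m := by rw [hFc]; ring
    _ ≤ M * r ^ m * ‖c - a‖ ^ m := by gcongr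
    _ = M * ‖c - a‖ ^ m * r ^ m := by ring

theorem abs_re_sub_le_and_abs_im_sub_le_of_mem_closedBall {z w : ℂ} {r : ℝ}
    (hz : z ∈ closedBall w r) : |z.re - w.re| ≤ r ∧ |z.im - w.im| ≤ r := by
  rw [mem_closedBall_iff_norm] at hz
  exact ⟨(sub_re z w ▸ abs_re_le_norm (z - w)).trans hz,
    (sub_im z w ▸ abs_im_le_norm (z - w)).trans hz⟩

theorem ne_one_of_mem_closedBall_one_add_mul_I {γ : ℝ} (hγ : 1 / 2 < γ) {z : ℂ}
    (hz : z ∈ closedBall (1 + γ * I) (1 / 2)) : z ≠ 1 := by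
  rintro rfl
  have him := (abs_re_sub_le_and_abs_im_sub_le_of_mem_closedBall hz).2
  simp only [add_im, one_im, mul_im, ofReal_re, I_im, ofReal_im, I_re] at him
  rw [abs_le] at him
  linarith [him.1]

theorem norm_riemannZeta_le_exp_of_mem_closedBall {γ M : ℝ}
    (hM : ∀ σ t : ℝ, 1 / 2 ≤ σ → |t| ≤ 1 / 2 →
      Real.log ‖riemannZeta (σ + (γ + t) * I)‖ ≤ M)
    {z : ℂ} (hz : z ∈ closedBall (1 + γ * I) (1 / 2)) : ‖riemannZeta z‖ ≤ Real.exp M := by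
  obtain ⟨hre, him⟩ := abs_re_sub_le_and_abs_im_sub_le_of_mem_closedBall hz
  simp only [add_re, one_re, mul_re, ofReal_re, I_re, ofReal_im, I_im, add_im, one_im,
    mul_im] at hre him
  have hz_eq : z = z.re + (γ + (z.im - γ : ℝ)) * I := by push_cast; simp [re_add_im]
  refine Real.le_exp_of_log_le ?_
  rw [hz_eq]
  exact hM _ _ (by linarith [(abs_le.mp hre).1]) (by simpa using him)

theorem multiplicity_bound_near_one_general
    (β γ c₀ M₁ : ℝ) (hβ2 : β < 1)
    (hγ : Real.exp (Real.exp 1) < γ) (hc₀ : 0 < c₀)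
    (hζ1 : c₀ * (Real.log γ) ^ (-(2 : ℝ) / 3) *
        (Real.log (Real.log γ)) ^ (-(1 : ℝ) / 3) ≤
      ‖riemannZeta (1 + γ * I)‖)
    (hM₁ : ∀ σ t : ℝ, 1 / 2 ≤ σ → |t| ≤ 1 / 2 →
      Real.log ‖riemannZeta (↑σ + (↑γ + ↑t) * I)‖ ≤ M₁)
    (m : ℕ)
    (g : ℂ → ℂ) (hg : AnalyticAt ℂ g (↑β + ↑γ * I))
    (hfg : ∀ᶠ z in nhds ((β : ℂ) + γ * I),
      riemannZeta z = (z - (↑β + ↑γ * I)) ^ m * g z) :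
    (m : ℝ) * Real.log (1 / (2 - 2 * β)) ≤
      M₁ + (2 / 3) * Real.log (Real.log γ) +
        (1 / 3) * Real.log (Real.log (Real.log γ)) - Real.log c₀ := by
  have hγ_pos : 0 < γ := (Real.exp_pos _).trans hγ
  have hlog_γ : Real.exp 1 < Real.log γ := (Real.lt_log_iff_exp_lt hγ_pos).mpr hγ
  have hlog_γ_pos : 0 < Real.log γ := (Real.exp_pos 1).trans hlog_γ
  have hlog_log_γ_pos : 0 < Real.log (Real.log γ) :=
    one_pos.trans <| (Real.lt_log_iff_exp_lt hlog_γ_pos).mpr hlog_γ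
  have hγ_half : 1 / 2 < γ := by
    linarith [Real.add_one_le_exp 1, Real.add_one_le_exp (Real.exp 1)]
  have hζ_bound := norm_le_mul_div_pow_of_eventuallyEq_pow_mul (by norm_num)
    (fun z hz _ =>
      differentiableAt_riemannZeta (ne_one_of_mem_closedBall_one_add_mul_I hγ_half hz))
    hg.differentiableAt hfg
    (fun z hz => norm_riemannZeta_le_exp_of_mem_closedBall hM₁ (sphere_subset_closedBall hz))
  have hdist : ‖1 + γ * I - (β + γ * I)‖ / (1 / 2) = 2 - 2 * β := by
    rw [show (1 + γ * I - (β + γ * I) : ℂ) = (1 - β : ℝ) by push_cast; ring, norm_real,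
      Real.norm_of_nonneg (by linarith)]
    ring
  rw [hdist] at hζ_bound
  have hlower_pos : 0 < c₀ * (Real.log γ) ^ (-(2 : ℝ) / 3) *
      (Real.log (Real.log γ)) ^ (-(1 : ℝ) / 3) := by positivity
  have hlog_le := Real.log_le_log hlower_pos (hζ1.trans hζ_bound)
  rw [Real.log_mul (by positivity) (by positivity), Real.log_mul (by positivity) (by positivity),
    Real.log_mul (by positivity) (pow_ne_zero _ (by linarith)), Real.log_rpow (by positivity),
    Real.log_rpow (by positivity), Real.log_exp, Real.log_pow] at hlog_le
  rw [one_div, Real.log_inv]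
  linarith

theorem multiplicity_bound_near_one
    (β γ c₀ M₁ : ℝ) (hβ1 : 1 / 2 < β) (hβ2 : β < 1)
    (hγ : Real.exp (Real.exp 1) < γ) (hc₀ : 0 < c₀)
    (hζ1 : c₀ * (Real.log γ) ^ (-(2 : ℝ) / 3) *
        (Real.log (Real.log γ)) ^ (-(1 : ℝ) / 3) ≤
      ‖riemannZeta (1 + γ * I)‖)
    (hM₁ : ∀ σ t : ℝ, 1 / 2 ≤ σ → |t| ≤ 1 / 2 →
      Real.log ‖riemannZeta (↑σ + (↑γ + ↑t) * I)‖ ≤ M₁)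
    (m : ℕ) (hm : 1 ≤ m)
    (g : ℂ → ℂ) (hg : AnalyticAt ℂ g (↑β + ↑γ * I)) (hg0 : g (↑β + ↑γ * I) ≠ 0)
    (hfg : ∀ᶠ z in nhds ((β : ℂ) + γ * I),
      riemannZeta z = (z - (↑β + ↑γ * I)) ^ m * g z) :
    (m : ℝ) * Real.log (1 / (2 - 2 * β)) ≤
      M₁ + (2 / 3) * Real.log (Real.log γ) +
        (1 / 3) * Real.log (Real.log (Real.log γ)) - Real.log c₀ :=
  multiplicity_bound_near_one_general β γ c₀ M₁ hβ2 hγ hc₀ hζ1 hM₁ m g hg hfg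
end
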